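/- arXiv:2008.09179 — 2 statements merged into one kernel-verified Lean document; each statement's English description precedes it below -/
import Mathlib

section
/- Let X be a metric space and let B assign to every ordered pair of points (α, β) of X a set B(α, β) ⊆ X, with the property that for all points α, β, γ ∈ X, every point of B(α, β) lies within distance 2 of the union B(α, γ) ∪ B(γ, β). Then for every natural number n ≥ 1 and every finite sequence of points x_0, x_1, …, x_{2^n} in X, and every c ∈ B(x_0, x_{2^n}), there exists an index i with 0 ≤ i ≤ 2^n − 1 and a point c* ∈ B(x_i, x_{i+1}) such that d(c, c*) ≤ 2n. -/
theorem bicorn_midpoint_aux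
    {X : Type*} [MetricSpace X] (B : X → X → Set X)
    (hB : ∀ α β γ : X, ∀ c ∈ B α β, ∃ c' ∈ B α γ ∪ B γ β, dist c c' ≤ 2)
    (n : ℕ) : ∀ (x : ℕ → X) (c : X), c ∈ B (x 0) (x (2 ^ n)) →
    ∃ i < 2 ^ n, ∃ cstar ∈ B (x i) (x (i + 1)), dist c cstar ≤ 2 * n := by
  induction n with
  | zero =>
    intro x c hc
    exact ⟨0, by norm_num, c, by simpa using hc, by simp⟩
  | succ n ih =>
    intro x c hc
    obtain ⟨c', hc', hd⟩ := hB (x 0) (x (2 ^ (n + 1))) (x (2 ^ n)) c hc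
    rcases hc' with h | h
    · obtain ⟨i, hi, cstar, hcs, hdist⟩ := ih x c' h
      refine ⟨i, lt_of_lt_of_le hi (Nat.pow_le_pow_right (by norm_num) (Nat.le_succ n)), cstar, hcs, ?_⟩
      calc dist c cstar ≤ dist c c' + dist c' cstar := dist_triangle _ _ _
        _ ≤ 2 + 2 * n := add_le_add hd hdist
        _ = 2 * (n + 1 : ℕ) := by push_cast; ring
    · obtain ⟨i, hi, cstar, hcs, hdist⟩ := ih (fun j => x (2 ^ n + j)) c'
        (by simpa [← two_mul, ← pow_succ'] using h)
      refine ⟨2 ^ n + i, by rw [pow_succ]; omega, cstar, ?_, ?_⟩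
      · simpa [Nat.add_assoc] using hcs
      · calc dist c cstar ≤ dist c c' + dist c' cstar := dist_triangle _ _ _
          _ ≤ 2 + 2 * n := add_le_add hd hdist
          _ = 2 * (n + 1 : ℕ) := by push_cast; ring

/-- The inductive core of Lemma 3.4: if a family `B` of subsets of a metric
space satisfies the subdivision property (each point of `B α β` lies within
distance 2 of `B α γ ∪ B γ β` for every `γ`), then for every `n ≥ 1`, every
sequence `x_0, …, x_{2^n}`, and every `c ∈ B (x 0) (x (2^n))`, there is an
index `i < 2^n` and a point `c* ∈ B (x i) (x (i+1))` with `dist c cstar ≤ 2n`. -/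
theorem bicorn_midpoint_pow
    {X : Type*} [MetricSpace X] (B : X → X → Set X)
    (hB : ∀ α β γ : X, ∀ c ∈ B α β, ∃ c' ∈ B α γ ∪ B γ β, dist c c' ≤ 2)
    (n : ℕ) (hn : 1 ≤ n) (x : ℕ → X)
    (c : X) (hc : c ∈ B (x 0) (x (2 ^ n))) :
    ∃ i < 2 ^ n, ∃ cstar ∈ B (x i) (x (i + 1)), dist c cstar ≤ 2 * n := by
  exact bicorn_midpoint_aux B hB n x c hc
end

section
/- Let X be a metric space and let B assign to every ordered pair of points (α, β) of X a set B(α, β) ⊆ X, with the property that for all points α, β, γ ∈ X, every point of B(α, β) lies within distance 2 of the union B(α, γ) ∪ B(γ, β). Let m and n be positive integers with 2^{n−1} < m ≤ 2^n. Then for every finite sequence of points x_0, x_1, …, x_m in X and every c ∈ B(x_0, x_m), there exists an index i with 0 ≤ i ≤ m − 1 and a point c* ∈ B(x_i, x_{i+1}) such that d(c, c*) ≤ 2n; in particular d(c, c*) ≤ 2⌈log₂ m⌉, where ⌈log₂ m⌉ is the least natural number n with m ≤ 2^n. -/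
/-!
Split `x_0, …, x_m` at `x_{2^(n-1)}`: the subdivision property moves `c` by at most `2` to a
point of `B` for one of the two halves, each of length at most `2^(n-1)`, so `n` halvings lead
to a single step `B (x i) (x (i+1))` after moving by at most `2n` in total.
-/

def SubdividesWithin {X : Type*} [PseudoMetricSpace X] (B : X → X → Set X) (D : ℝ) : Prop :=
  ∀ α β γ : X, ∀ c ∈ B α β, ∃ c' ∈ B α γ ∪ B γ β, dist c c' ≤ D

namespace SubdividesWithin

variable {X : Type*} [PseudoMetricSpace X] {B : X → X → Set X} {D : ℝ}

theorem nonneg {α β c : X} (hB : SubdividesWithin B D) (hc : c ∈ B α β) : 0 ≤ D :=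
  let ⟨_, _, h⟩ := hB α β α c hc
  dist_nonneg.trans h

theorem exists_step_dist_le_of_le_two_pow (hB : SubdividesWithin B D) (x : ℕ → X) (n : ℕ) :
    ∀ {a m : ℕ}, 0 < m → m ≤ 2 ^ n → ∀ c ∈ B (x a) (x (a + m)),
      ∃ i, a ≤ i ∧ i < a + m ∧ ∃ c' ∈ B (x i) (x (i + 1)), dist c c' ≤ D * n := by
  induction n with
  | zero =>
    intro a m hm hmn c hc
    obtain rfl : m = 1 := by simp at hmn; omega
    exact ⟨a, le_rfl, by omega, c, hc, by simp⟩
  | succ n ih =>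
    intro a m hm hmn c hc
    have hD : D * n ≤ D * (n + 1 : ℕ) := by gcongr; exacts [hB.nonneg hc, by omega]
    rcases le_or_gt m (2 ^ n) with hle | hlt
    · obtain ⟨i, hai, him, c', hc', hd⟩ := ih hm hle c hc
      exact ⟨i, hai, him, c', hc', hd.trans hD⟩
    obtain ⟨c', hc', hcc'⟩ := hB _ _ (x (a + 2 ^ n)) c hc
    obtain ⟨i, hai, him, c'', hc'', hd⟩ :
        ∃ i, a ≤ i ∧ i < a + m ∧ ∃ c'' ∈ B (x i) (x (i + 1)), dist c' c'' ≤ D * n := by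
      rcases hc' with hleft | hright
      · obtain ⟨i, hai, him, h⟩ := ih (Nat.two_pow_pos n) le_rfl c' hleft
        exact ⟨i, hai, by omega, h⟩
      · have hsplit : a + m = a + 2 ^ n + (m - 2 ^ n) := by omega
        rw [hsplit] at hright
        obtain ⟨i, hai, him, h⟩ := ih (by omega) (by rw [pow_succ] at hmn; omega) c' hright
        exact ⟨i, by omega, by omega, h⟩
    refine ⟨i, hai, him, c'', hc'', ?_⟩
    calc dist c c'' ≤ dist c c' + dist c' c'' := dist_triangle _ _ _
      _ ≤ D + D * n := add_le_add hcc' hd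
      _ = D * (n + 1 : ℕ) := by push_cast; ring

end SubdividesWithin

theorem Nat.clog_eq_of_pow_pred_lt_of_le_pow {b m n : ℕ} (hb : 1 < b) (h1 : b ^ (n - 1) < m)
    (h2 : m ≤ b ^ n) : Nat.clog b m = n := by
  have hlt : n - 1 < Nat.clog b m := (Nat.lt_clog_iff_pow_lt hb).mpr h1
  have hle : Nat.clog b m ≤ n := Nat.clog_le_of_le_pow h2
  omega

theorem bicorn_midpoint_general
    {X : Type*} [MetricSpace X] (B : X → X → Set X)
    (hB : ∀ α β γ : X, ∀ c ∈ B α β, ∃ c' ∈ B α γ ∪ B γ β, dist c c' ≤ 2)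
    (m n : ℕ)
    (h1 : 2 ^ (n - 1) < m) (h2 : m ≤ 2 ^ n) (x : ℕ → X)
    (c : X) (hc : c ∈ B (x 0) (x m)) :
    ∃ i < m, ∃ cstar ∈ B (x i) (x (i + 1)),
      dist c cstar ≤ 2 * n ∧ dist c cstar ≤ 2 * Nat.clog 2 m := by
  rw [← zero_add m] at hc
  obtain ⟨i, -, him, cstar, hcstar, hd⟩ :=
    SubdividesWithin.exists_step_dist_le_of_le_two_pow hB x n (Nat.zero_lt_of_lt h1) h2 c hc
  rw [Nat.clog_eq_of_pow_pred_lt_of_le_pow one_lt_two h1 h2]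
  exact ⟨i, by omega, cstar, hcstar, hd, hd⟩

/-- Lemma 3.4 for an abstract family `B` of subsets of a metric space
satisfying the subdivision property: for positive integers `m, n` with
`2^(n-1) < m ≤ 2^n`, every sequence `x_0, …, x_m`, and every
`c ∈ B (x 0) (x m)`, there is an index `i < m` and a point
`c* ∈ B (x i) (x (i+1))` with `dist c c* ≤ 2n`; in particular
`dist c c* ≤ 2 * ⌈log₂ m⌉`, where `Nat.clog 2 m` is the least natural
number `n` with `m ≤ 2 ^ n`. -/
theorem bicorn_midpoint
    {X : Type*} [MetricSpace X] (B : X → X → Set X)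
    (hB : ∀ α β γ : X, ∀ c ∈ B α β, ∃ c' ∈ B α γ ∪ B γ β, dist c c' ≤ 2)
    (m n : ℕ) (hm : 0 < m) (hn : 0 < n)
    (h1 : 2 ^ (n - 1) < m) (h2 : m ≤ 2 ^ n) (x : ℕ → X)
    (c : X) (hc : c ∈ B (x 0) (x m)) :
    ∃ i < m, ∃ cstar ∈ B (x i) (x (i + 1)),
      dist c cstar ≤ 2 * n ∧ dist c cstar ≤ 2 * Nat.clog 2 m :=
  bicorn_midpoint_general B hB m n h1 h2 x c hc
end
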